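/- Let h : ℝ^d → ℝ^d satisfy the dissipativity condition ⟨h(x), x⟩ ≥ a‖x‖² − b for constants a, b > 0, and for λ ∈ (0,1) define the tamed drift h_λ(x) := a·x + (h(x) − a·x) / (1 + λ‖x‖^{2(ℓ+1)})^{1/2}. Then h_λ satisfies the same dissipativity condition: ⟨h_λ(x), x⟩ ≥ a‖x‖² − b for all x ∈ ℝ^d. -/
import Mathlib


open scoped RealInnerProductSpace

/-- Dissipativity of the tamed drift. -/
theorem tamed_drift_dissipativity {d : ℕ}
    (h : EuclideanSpace ℝ (Fin d) → EuclideanSpace ℝ (Fin d))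
    (a b : ℝ) (ha : 0 < a) (hb : 0 < b) (ℓ : ℕ) (lam : ℝ)
    (hlam : lam ∈ Set.Ioo (0 : ℝ) 1)
    (hdiss : ∀ x, a * ‖x‖ ^ 2 - b ≤ ⟪h x, x⟫) :
    ∀ x : EuclideanSpace ℝ (Fin d),
      a * ‖x‖ ^ 2 - b ≤
        ⟪a • x + (Real.sqrt (1 + lam * ‖x‖ ^ (2 * (ℓ + 1))))⁻¹ • (h x - a • x), x⟫ := by
  intro x
  set c := Real.sqrt (1 + lam * ‖x‖ ^ (2 * (ℓ + 1))) with hc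
  have hc1 : 1 ≤ c := by
    have h1 : (1:ℝ) ≤ 1 + lam * ‖x‖ ^ (2 * (ℓ + 1)) := by
      nlinarith [pow_nonneg (norm_nonneg x) (2 * (ℓ + 1)), hlam.1.le]
    calc (1:ℝ) = Real.sqrt 1 := by simp
    _ ≤ c := Real.sqrt_le_sqrt h1
  have hcpos : 0 < c := lt_of_lt_of_le one_pos hc1
  have ht0 : 0 < c⁻¹ := inv_pos.mpr hcpos
  have ht1 : c⁻¹ ≤ 1 := inv_le_one_of_one_le₀ hc1
  have hs : -b ≤ ⟪h x, x⟫ - a * ‖x‖ ^ 2 := by linarith [hdiss x]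
  have hexp : ⟪a • x + c⁻¹ • (h x - a • x), x⟫
      = a * ‖x‖ ^ 2 + c⁻¹ * (⟪h x, x⟫ - a * ‖x‖ ^ 2) := by
    rw [inner_add_left, real_inner_smul_left, real_inner_smul_left, inner_sub_left,
      real_inner_smul_left, real_inner_self_eq_norm_sq]
  rw [hexp]
  nlinarith [mul_nonneg ht0.le (by linarith [hdiss x] : (0:ℝ) ≤ ⟪h x, x⟫ - a * ‖x‖ ^ 2 + b)]
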